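/- For all integers k ≥ 1 and a ≥ 1, in K[B] one has B_ev^{(2k)} · B_ev^{(2a)} = [2k+2a choose 2k] · ( B_ev^{(2k+2a)} + Σ_{ℓ=1}^{k} ( [2k+2a−2ℓ] / [2k+2a] ) · ( ∏_{m=1}^{ℓ} [2a−2m+2]·[2k−2m+2] / ( [2k+2a−2m+1]·[2m] ) ) · (qς)^{ℓ} · B_ev^{(2k+2a−2ℓ)} ). -/

import Mathlib

noncomputable section

open Polynomial Finset

abbrev Kq : Type := RatFunc ℚ

/-- The variable `q` in `ℚ(q)`. -/
def qq : Kq := RatFunc.X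

/-- The quantum integer `[n] = (q^n - q^{-n})/(q - q^{-1})` for `n : ℤ`. -/
def qint (n : ℤ) : Kq := (qq ^ n - qq ^ (-n)) / (qq - qq⁻¹)

/-- The quantum factorial `[n]! = ∏_{i=1}^n [i]`. -/
def qfact (n : ℕ) : Kq := ∏ i ∈ Finset.range n, qint ((i : ℤ) + 1)

/-- The quantum binomial `[n choose m] = [n]!/([m]!·[n-m]!)`. -/
def qbinom (n m : ℕ) : Kq := qfact n / (qfact m * qfact (n - m))

/-- The even ı-divided power `B_ev^{(n)}` in `K[B]`. -/
def BevP (ς : Kq) (n : ℕ) : Polynomial Kq :=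
  if Even n then
    Polynomial.C (qfact n)⁻¹ *
      ∏ j ∈ Finset.range (n / 2),
        ((Polynomial.X : Polynomial Kq) ^ 2 - Polynomial.C (qq * ς * (qint (2 * (j : ℤ))) ^ 2))
  else
    Polynomial.C (qfact n)⁻¹ *
      (Polynomial.X *
        ∏ j ∈ Finset.range (n / 2),
          ((Polynomial.X : Polynomial Kq) ^ 2 - Polynomial.C (qq * ς * (qint (2 * (j : ℤ) + 2)) ^ 2)))

/-- The odd ı-divided power `B_odd^{(n)}` in `K[B]`. -/
def BoddP (ς : Kq) (n : ℕ) : Polynomial Kq :=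
  if Even n then
    Polynomial.C (qfact n)⁻¹ *
      ∏ j ∈ Finset.range (n / 2),
        ((Polynomial.X : Polynomial Kq) ^ 2 - Polynomial.C (qq * ς * (qint (2 * (j : ℤ) + 1)) ^ 2))
  else
    Polynomial.C (qfact n)⁻¹ *
      (Polynomial.X *
        ∏ j ∈ Finset.range (n / 2),
          ((Polynomial.X : Polynomial Kq) ^ 2 - Polynomial.C (qq * ς * (qint (2 * (j : ℤ) + 1)) ^ 2)))


lemma qq_ne : (qq : Kq) ≠ 0 := RatFunc.X_ne_zero

lemma qq_pow_ne_one (m : ℕ) (hm : m ≠ 0) : (qq : Kq) ^ m ≠ 1 := by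
  intro h
  have h2 : (algebraMap (Polynomial ℚ) Kq) (Polynomial.X ^ m) = (algebraMap (Polynomial ℚ) Kq) 1 := by
    simpa [qq, map_pow] using h
  have h3 : (Polynomial.X : Polynomial ℚ) ^ m = 1 := RatFunc.algebraMap_injective ℚ h2
  have := congrArg Polynomial.natDegree h3
  simp [Polynomial.natDegree_X_pow] at this
  exact hm this

lemma qden_ne : (qq : Kq) - qq⁻¹ ≠ 0 := by
  intro h
  have h1 : (qq : Kq) = qq⁻¹ := by linear_combination h
  have h2 : (qq : Kq) ^ 2 = 1 := by
    have := congrArg (· * qq) h1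
    simpa [sq, inv_mul_cancel₀ qq_ne] using this
  exact qq_pow_ne_one 2 (by norm_num) h2

lemma qnum_ne {n : ℤ} (hn : 0 < n) : (qq : Kq) ^ n - qq ^ (-n) ≠ 0 := by
  intro h
  have h1 : (qq : Kq) ^ n = qq ^ (-n) := by linear_combination h
  have h2 : (qq : Kq) ^ (2 * n) = 1 := by
    have : (qq : Kq) ^ n * qq ^ n = qq ^ (-n) * qq ^ n := by rw [h1]
    rw [← zpow_add₀ qq_ne, ← zpow_add₀ qq_ne] at this
    simpa [two_mul] using this
  have h3 : (qq : Kq) ^ ((2 * n).toNat) = 1 := by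
    rw [← zpow_natCast, Int.toNat_of_nonneg (by omega)]; exact h2
  exact qq_pow_ne_one (2 * n).toNat (by omega) h3

lemma qint_ne {n : ℤ} (hn : 0 < n) : qint n ≠ 0 :=
  div_ne_zero (qnum_ne hn) qden_ne

lemma qfact_succ (n : ℕ) : qfact (n + 1) = qfact n * qint ((n : ℤ) + 1) := by
  rw [qfact, qfact, Finset.prod_range_succ]

lemma qfact_ne (n : ℕ) : qfact n ≠ 0 := by
  induction n with
  | zero => simp [qfact]
  | succ n ih => rw [qfact_succ]; exact mul_ne_zero ih (qint_ne (by positivity))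

lemma qint_eq (n : ℤ) : qint n = (qq ^ n - (qq ^ n)⁻¹) / (qq - qq⁻¹) := by
  rw [qint, zpow_neg]

set_option maxHeartbeats 1000000 in
lemma nn_id (u v s t : Kq) (hu' : u ≠ 0) (hv' : v ≠ 0) (hs' : s ≠ 0) (ht' : t ≠ 0) :
    (v*s⁻¹*t - v⁻¹*s*t⁻¹) * (u*t - u⁻¹*t⁻¹) * (u*v - u⁻¹*v⁻¹) =
    (u*v*s⁻¹ - u⁻¹*v⁻¹*s) * (v*s⁻¹*t - v⁻¹*s*t⁻¹) * (u*s⁻¹*t - u⁻¹*s*t⁻¹) +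
      (s - s⁻¹) * ((u*v*s⁻¹*t - u⁻¹*v⁻¹*s*t⁻¹)^2 - (u - u⁻¹)^2) := by
  have hu : u * u⁻¹ = 1 := mul_inv_cancel₀ hu'
  have hv : v * v⁻¹ = 1 := mul_inv_cancel₀ hv'
  have hs : s * s⁻¹ = 1 := mul_inv_cancel₀ hs'
  have ht : t * t⁻¹ = 1 := mul_inv_cancel₀ ht'
  linear_combination ((2 : Kq) * s⁻¹ + (-2 : Kq) * s + v⁻¹ ^ 2 * s * t * t⁻¹ + (-1 : Kq) * v⁻¹ ^ 2 * s ^ 2 * s⁻¹ * t * t⁻¹ + (-1 : Kq) * v * v⁻¹ * s⁻¹ * t ^ 2 + v * v⁻¹ * s * t⁻¹ ^ 2 + (-2 : Kq) * v * v⁻¹ * s * s⁻¹ ^ 2 * t * t⁻¹ + v * v⁻¹ * s * s⁻¹ ^ 2 * t ^ 2 + (-1 : Kq) * v * v⁻¹ * s ^ 2 * s⁻¹ * t⁻¹ ^ 2 + (2 : Kq) * v * v⁻¹ * s ^ 2 * s⁻¹ * t * t⁻¹ + (-1 : Kq) * v ^ 2 * s⁻¹ * t * t⁻¹ + v ^ 2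 * s * s⁻¹ ^ 2 * t * t⁻¹) * hu +
      ((-1 : Kq) * s⁻¹ * t ^ 2 + s * t⁻¹ ^ 2 + (-2 : Kq) * s * s⁻¹ ^ 2 * t * t⁻¹ + s * s⁻¹ ^ 2 * t ^ 2 + (-1 : Kq) * s ^ 2 * s⁻¹ * t⁻¹ ^ 2 + (2 : Kq) * s ^ 2 * s⁻¹ * t * t⁻¹ + u⁻¹ ^ 2 * s⁻¹ * t * t⁻¹ + (-1 : Kq) * u⁻¹ ^ 2 * s ^ 2 * s⁻¹ * t * t⁻¹ + (-1 : Kq) * u ^ 2 * s * t * t⁻¹ + u ^ 2 * s * s⁻¹ ^ 2 * t * t⁻¹) * hv +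
      ((-2 : Kq) * s⁻¹ * t * t⁻¹ + s⁻¹ * t ^ 2 + (-1 : Kq) * s * t⁻¹ ^ 2 + (2 : Kq) * s * t * t⁻¹ + (-1 : Kq) * v⁻¹ ^ 2 * s * t * t⁻¹ + v ^ 2 * s⁻¹ * t * t⁻¹ + (-1 : Kq) * u⁻¹ ^ 2 * s * t * t⁻¹ + u⁻¹ ^ 2 * v⁻¹ ^ 2 * s * t⁻¹ ^ 2 + u ^ 2 * s⁻¹ * t * t⁻¹ + (-1 : Kq) * u ^ 2 * v ^ 2 * s⁻¹ * t ^ 2) * hs +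
      ((-2 : Kq) * s⁻¹ + (2 : Kq) * s + u⁻¹ ^ 2 * s⁻¹ + (-1 : Kq) * u⁻¹ ^ 2 * s + u ^ 2 * s⁻¹ + (-1 : Kq) * u ^ 2 * s) * ht

lemma div_strip (A B C D E F G H I d : Kq) (hd : d ≠ 0)
    (h : A*B*C = D*E*F + G*(H^2 - I^2)) :
    A/d*(B/d)*(C/d) = D/d*(E/d)*(F/d) + G/d*((H/d)^2-(I/d)^2) := by
  field_simp
  linear_combination h

lemma qint_split2 (m p : ℤ) :
    qint (m + p) = (qq^m*qq^p - (qq^m)⁻¹*(qq^p)⁻¹)/(qq - qq⁻¹) := by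
  rw [qint, zpow_add₀ qq_ne, show -(m+p) = -m + -p by ring, zpow_add₀ qq_ne,
    zpow_neg, zpow_neg]

lemma qint_split3 (m n p : ℤ) :
    qint (m + n + p) = (qq^m*qq^n*qq^p - (qq^m)⁻¹*(qq^n)⁻¹*(qq^p)⁻¹)/(qq - qq⁻¹) := by
  rw [qint, zpow_add₀ qq_ne, zpow_add₀ qq_ne, show -(m+n+p) = -m + -n + -p by ring,
    zpow_add₀ qq_ne, zpow_add₀ qq_ne, zpow_neg, zpow_neg, zpow_neg]

lemma qint_split4 (m n p r : ℤ) :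
    qint (m + n + p + r) = (qq^m*qq^n*qq^p*qq^r - (qq^m)⁻¹*(qq^n)⁻¹*(qq^p)⁻¹*(qq^r)⁻¹)/(qq - qq⁻¹) := by
  rw [qint, zpow_add₀ qq_ne, zpow_add₀ qq_ne, zpow_add₀ qq_ne,
    show -(m+n+p+r) = -m + -n + -p + -r by ring,
    zpow_add₀ qq_ne, zpow_add₀ qq_ne, zpow_add₀ qq_ne, zpow_neg, zpow_neg, zpow_neg, zpow_neg]

lemma qint_star (x y w : ℤ) :
    qint (y - w + 2) * qint (x + 2) * qint (x + y) =
      qint (x + y - w) * qint (y - w + 2) * qint (x - w + 2) +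
        qint w * (qint (x + y - w + 2) ^ 2 - qint x ^ 2) := by
  have hu : (qq : Kq) ^ x ≠ 0 := zpow_ne_zero _ qq_ne
  have hv : (qq : Kq) ^ y ≠ 0 := zpow_ne_zero _ qq_ne
  have hw : (qq : Kq) ^ w ≠ 0 := zpow_ne_zero _ qq_ne
  have h2 : (qq : Kq) ^ (2 : ℤ) ≠ 0 := zpow_ne_zero _ qq_ne
  have E1 : qint (y - w + 2)
      = ((qq:Kq)^y*((qq:Kq)^w)⁻¹*(qq:Kq)^(2:ℤ) - ((qq:Kq)^y)⁻¹*(qq:Kq)^w*((qq:Kq)^(2:ℤ))⁻¹)/(qq - qq⁻¹) := by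
    have h := qint_split3 y (-w) 2
    simp only [zpow_neg, inv_inv] at h
    rw [show (y : ℤ) - w + 2 = y + -w + 2 by ring]
    simpa [zpow_neg] using h
  have E2 : qint (x + 2)
      = ((qq:Kq)^x*(qq:Kq)^(2:ℤ) - ((qq:Kq)^x)⁻¹*((qq:Kq)^(2:ℤ))⁻¹)/(qq - qq⁻¹) := qint_split2 x 2
  have E3 : qint (x + y)
      = ((qq:Kq)^x*(qq:Kq)^y - ((qq:Kq)^x)⁻¹*((qq:Kq)^y)⁻¹)/(qq - qq⁻¹) := qint_split2 x y
  have E4 : qint (x + y - w)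
      = ((qq:Kq)^x*(qq:Kq)^y*((qq:Kq)^w)⁻¹ - ((qq:Kq)^x)⁻¹*((qq:Kq)^y)⁻¹*(qq:Kq)^w)/(qq - qq⁻¹) := by
    have h := qint_split3 x y (-w)
    simp only [zpow_neg, inv_inv] at h
    rw [show (x : ℤ) + y - w = x + y + -w by ring]
    simpa [zpow_neg] using h
  have E5 : qint (x - w + 2)
      = ((qq:Kq)^x*((qq:Kq)^w)⁻¹*(qq:Kq)^(2:ℤ) - ((qq:Kq)^x)⁻¹*(qq:Kq)^w*((qq:Kq)^(2:ℤ))⁻¹)/(qq - qq⁻¹) := by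
    have h := qint_split3 x (-w) 2
    simp only [zpow_neg, inv_inv] at h
    rw [show (x : ℤ) - w + 2 = x + -w + 2 by ring]
    simpa [zpow_neg] using h
  have E6 : qint w = ((qq:Kq)^w - ((qq:Kq)^w)⁻¹)/(qq - qq⁻¹) := qint_eq w
  have E7 : qint (x + y - w + 2)
      = ((qq:Kq)^x*(qq:Kq)^y*((qq:Kq)^w)⁻¹*(qq:Kq)^(2:ℤ)
          - ((qq:Kq)^x)⁻¹*((qq:Kq)^y)⁻¹*(qq:Kq)^w*((qq:Kq)^(2:ℤ))⁻¹)/(qq - qq⁻¹) := by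
    have h := qint_split4 x y (-w) 2
    simp only [zpow_neg, inv_inv] at h
    rw [show (x : ℤ) + y - w + 2 = x + y + -w + 2 by ring]
    simpa [zpow_neg] using h
  have E8 : qint x = ((qq:Kq)^x - ((qq:Kq)^x)⁻¹)/(qq - qq⁻¹) := qint_eq x
  rw [E1, E2, E3, E4, E5, E6, E7, E8]
  exact div_strip _ _ _ _ _ _ _ _ _ _ qden_ne
    (nn_id ((qq:Kq)^x) ((qq:Kq)^y) ((qq:Kq)^w) ((qq:Kq)^(2:ℤ)) hu hv hw h2)

lemma qint_zero : qint 0 = 0 := by simp [qint]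

/-- shifted product of quadratic factors -/
def Gp (ς : Kq) (a n : ℕ) : Polynomial Kq :=
  ∏ j ∈ Finset.range n,
    ((Polynomial.X : Polynomial Kq) ^ 2 - Polynomial.C (qq * ς * (qint (2 * ((a : ℤ) + (j : ℤ)))) ^ 2))

def Pn (c : ℤ) (j : ℕ) : Kq := ∏ i ∈ Finset.range j, qint (c - 2 * (i : ℤ))

def P4 (j : ℕ) : Kq := ∏ i ∈ Finset.range j, qint (2 * (i : ℤ) + 2)

def FFp (c : ℤ) (ℓ : ℕ) : Kq := ∏ i ∈ Finset.range ℓ, qint (c - (i : ℤ))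

def cc (k a : ℤ) (ℓ : ℕ) : Kq :=
  FFp (2 * k + 2 * a) (2 * ℓ) * (qint (2 * k + 2 * a - 2 * ℓ) / qint (2 * k + 2 * a)) *
    ((Pn (2 * a) ℓ * Pn (2 * k) ℓ) / (Pn (2 * k + 2 * a - 1) ℓ * P4 ℓ))

lemma cc_zero (x : ℤ) (a : ℕ) (hx : 0 ≤ x) (ha : 1 ≤ a) : cc x (a : ℤ) 0 = 1 := by
  have h : qint (2 * x + 2 * (a : ℤ)) ≠ 0 := qint_ne (by omega)
  simp [cc, FFp, Pn, P4, div_self h]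

lemma cc_top_zero (k a : ℕ) : cc (k : ℤ) (a : ℤ) (k + 1) = 0 := by
  have h : Pn (2 * (k : ℤ)) (k + 1) = 0 := by
    apply Finset.prod_eq_zero (Finset.self_mem_range_succ k)
    rw [show 2 * (k : ℤ) - 2 * (k : ℤ) = 0 by ring, qint_zero]
  rw [cc, h]
  simp

lemma prod_Icc_to_range (g : ℕ → Kq) (j : ℕ) :
    ∏ m ∈ Finset.Icc 1 j, g m = ∏ i ∈ Finset.range j, g (i + 1) := by
  rw [← Finset.Ico_add_one_right_eq_Icc, Finset.prod_Ico_eq_prod_range]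
  simp [add_comm]

lemma sum_Icc_to_range (g : ℕ → Polynomial Kq) (j : ℕ) :
    ∑ m ∈ Finset.Icc 1 j, g m = ∑ i ∈ Finset.range j, g (i + 1) := by
  rw [← Finset.Ico_add_one_right_eq_Icc, Finset.sum_Ico_eq_sum_range]
  simp [add_comm]

lemma FF_mul_fact (N : ℕ) (ℓ : ℕ) (h : 2 * ℓ ≤ N) :
    FFp (N : ℤ) (2 * ℓ) * qfact (N - 2 * ℓ) = qfact N := by
  induction ℓ with
  | zero => simp [FFp]
  | succ n ih =>
    have h' : 2 * n ≤ N := by omega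
    have e : FFp (N : ℤ) (2 * (n + 1))
        = FFp (N : ℤ) (2 * n) * qint ((N : ℤ) - ((2 * n : ℕ) : ℤ)) * qint ((N : ℤ) - ((2 * n + 1 : ℕ) : ℤ)) := by
      rw [show 2 * (n + 1) = 2 * n + 1 + 1 by ring, FFp, Finset.prod_range_succ,
        Finset.prod_range_succ, ← FFp]
    have hM : N - 2 * n = (N - 2 * (n + 1)) + 1 + 1 := by omega
    have s1 : qfact (N - 2 * n)
        = qfact (N - 2 * (n + 1)) * qint ((N : ℤ) - ((2 * n + 1 : ℕ) : ℤ)) * qint ((N : ℤ) - ((2 * n : ℕ) : ℤ)) := by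
      rw [hM, qfact_succ, qfact_succ,
        show ((N - 2 * (n + 1) : ℕ) : ℤ) + 1 = (N : ℤ) - ((2 * n + 1 : ℕ) : ℤ) by push_cast; omega,
        show ((N - 2 * (n + 1) + 1 : ℕ) : ℤ) + 1 = (N : ℤ) - ((2 * n : ℕ) : ℤ) by push_cast; omega]
    rw [e, ← ih h', s1]
    ring

lemma Gp_merge (ς : Kq) (a m : ℕ) : Gp ς 0 a * Gp ς a m = Gp ς 0 (a + m) := by
  rw [Gp, Gp, Gp, Finset.prod_range_add]
  congr 1
  apply Finset.prod_congr rfl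
  intro i _
  congr 3
  push_cast
  ring

lemma BevP_even (ς : Kq) (n : ℕ) :
    BevP ς (2 * n) = Polynomial.C (qfact (2 * n))⁻¹ * Gp ς 0 n := by
  rw [BevP, if_pos (even_two_mul n), Gp]
  congr 1
  rw [Nat.mul_div_cancel_left n (by norm_num)]
  apply Finset.prod_congr rfl
  intro i _
  congr 3
  ring

lemma Pn_ne (c : ℤ) (j : ℕ) (h : ∀ i : ℕ, i < j → 0 < c - 2*(i:ℤ)) : Pn c j ≠ 0 := by
  rw [Pn]
  apply Finset.prod_ne_zero_iff.mpr
  intro i hi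
  exact qint_ne (h i (Finset.mem_range.mp hi))

lemma P4_ne (j : ℕ) : P4 j ≠ 0 := by
  rw [P4]
  apply Finset.prod_ne_zero_iff.mpr
  intro i _
  exact qint_ne (by omega)

lemma Pn_top (c : ℤ) (j : ℕ) : Pn c (j+1) = Pn c j * qint (c - 2*(j:ℤ)) := by
  rw [Pn, Finset.prod_range_succ, ← Pn]

lemma Pn_bot (c : ℤ) (j : ℕ) : Pn c (j+1) = Pn (c-2) j * qint c := by
  rw [Pn, Pn, Finset.prod_range_succ']
  congr 1
  all_goals first
    | (apply Finset.prod_congr rfl; intro i _; congr 1; push_cast; ring)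
    | (congr 1; push_cast; ring)
    | (congr 1)
    | rfl

lemma P4_top (j : ℕ) : P4 (j+1) = P4 j * qint (2*(j:ℤ)+2) := by
  rw [P4, Finset.prod_range_succ, ← P4]

lemma FFp_top (c : ℤ) (m : ℕ) : FFp c (m+1) = FFp c m * qint (c - (m:ℤ)) := by
  rw [FFp, Finset.prod_range_succ, ← FFp]

lemma FFp_bot (c : ℤ) (m : ℕ) : FFp c (m+1) = FFp (c-1) m * qint c := by
  rw [FFp, FFp, Finset.prod_range_succ']
  congr 1
  all_goals first
    | (apply Finset.prod_congr rfl; intro i _; congr 1; push_cast; ring)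
    | (congr 1; push_cast; ring)
    | (congr 1)
    | rfl

set_option maxHeartbeats 1000000 in
lemma Wfactor (A B1 B2 B3 B4 u1 u2 r0 rj rj1 rj2 na nk nk2 p4 D : Kq)
    (hu1 : u1 ≠ 0) (hu2 : u2 ≠ 0) (hr0 : r0 ≠ 0) (hrj1 : rj1 ≠ 0) (hp4 : p4 ≠ 0)
    (hB3 : B3 ≠ 0) (hB4 : B4 ≠ 0)
    (key : na*nk2*r0 = rj2*na*nk + p4*D) :
    A*u1*u2 * (rj/u2) * (B1*na*(B2*nk2)/(B3*u1*(B4*p4)))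
      = A*rj*rj1 * (rj2/r0) * (B1*na*(B2*nk)/(B3*rj1*(B4*p4)))
        + A * (rj/r0) * (B1*B2/(B3*B4)) * D := by
  have hD1 : u2*(B3*u1*(B4*p4)) ≠ 0 := by
    exact mul_ne_zero hu2 (mul_ne_zero (mul_ne_zero hB3 hu1) (mul_ne_zero hB4 hp4))
  have hD2 : r0*(B3*rj1*(B4*p4)) ≠ 0 := by
    exact mul_ne_zero hr0 (mul_ne_zero (mul_ne_zero hB3 hrj1) (mul_ne_zero hB4 hp4))
  have hD3 : r0*(B3*B4) ≠ 0 := mul_ne_zero hr0 (mul_ne_zero hB3 hB4)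
  have e1 : A*u1*u2 * (rj/u2) * (B1*na*(B2*nk2)/(B3*u1*(B4*p4)))
      = (A*u1*u2*rj*B1*na*B2*nk2) / (u2*(B3*u1*(B4*p4))) := by ring
  have e2 : A*rj*rj1 * (rj2/r0) * (B1*na*(B2*nk)/(B3*rj1*(B4*p4)))
      = (A*rj*rj1*rj2*B1*na*B2*nk) / (r0*(B3*rj1*(B4*p4))) := by ring
  have e3 : A * (rj/r0) * (B1*B2/(B3*B4)) * D = (A*rj*B1*B2*D) / (r0*(B3*B4)) := by ring
  rw [e1, e2, e3, div_add_div _ _ hD2 hD3, div_eq_div_iff hD1 (mul_ne_zero hD2 hD3)]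
  linear_combination (A*rj*B1*B2*u1*u2*B3^2*B4^2*p4*rj1*r0) * key

lemma cc_rec (k a j : ℕ) (ha : 1 ≤ a) (hj : j ≤ k) :
    cc ((k : ℤ)+1) (a : ℤ) (j+1)
      = cc (k : ℤ) (a : ℤ) (j+1)
        + cc (k : ℤ) (a : ℤ) j *
            (qint (2*(k:ℤ)+2*(a:ℤ)-2*(j:ℤ)) ^ 2 - qint (2*(k:ℤ)) ^ 2) := by
  have pFF1 : FFp (2*((k:ℤ)+1)+2*(a:ℤ)) (2*(j+1))
      = FFp (2*(k:ℤ)+2*(a:ℤ)) (2*j) * qint (2*(k:ℤ)+2*(a:ℤ)+1) * qint (2*(k:ℤ)+2*(a:ℤ)+2) := by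
    rw [show 2*(j+1) = 2*j+1+1 by ring, FFp_bot, FFp_bot,
      show 2*((k:ℤ)+1)+2*(a:ℤ)-1-1 = 2*(k:ℤ)+2*(a:ℤ) by ring,
      show 2*((k:ℤ)+1)+2*(a:ℤ)-1 = 2*(k:ℤ)+2*(a:ℤ)+1 by ring,
      show 2*((k:ℤ)+1)+2*(a:ℤ) = 2*(k:ℤ)+2*(a:ℤ)+2 by ring]
  have pFF2 : FFp (2*(k:ℤ)+2*(a:ℤ)) (2*(j+1))
      = FFp (2*(k:ℤ)+2*(a:ℤ)) (2*j) * qint (2*(k:ℤ)+2*(a:ℤ)-2*(j:ℤ)) * qint (2*(k:ℤ)+2*(a:ℤ)-2*(j:ℤ)-1) := by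
    rw [show 2*(j+1) = 2*j+1+1 by ring, FFp_top, FFp_top,
      show ((2*j+1 : ℕ) : ℤ) = 2*(j:ℤ)+1 by push_cast; ring,
      show ((2*j : ℕ) : ℤ) = 2*(j:ℤ) by push_cast; ring,
      show 2*(k:ℤ)+2*(a:ℤ)-(2*(j:ℤ)+1) = 2*(k:ℤ)+2*(a:ℤ)-2*(j:ℤ)-1 by ring]
  have pA1 : Pn (2*(a:ℤ)) (j+1) = Pn (2*(a:ℤ)) j * qint (2*(a:ℤ)-2*(j:ℤ)) := Pn_top _ _
  have pA2 : Pn (2*((k:ℤ)+1)) (j+1) = Pn (2*(k:ℤ)) j * qint (2*(k:ℤ)+2) := by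
    rw [Pn_bot, show 2*((k:ℤ)+1)-2 = 2*(k:ℤ) by ring, show 2*((k:ℤ)+1) = 2*(k:ℤ)+2 by ring]
  have pA3 : Pn (2*((k:ℤ)+1)+2*(a:ℤ)-1) (j+1) = Pn (2*(k:ℤ)+2*(a:ℤ)-1) j * qint (2*(k:ℤ)+2*(a:ℤ)+1) := by
    rw [Pn_bot, show 2*((k:ℤ)+1)+2*(a:ℤ)-1-2 = 2*(k:ℤ)+2*(a:ℤ)-1 by ring,
      show 2*((k:ℤ)+1)+2*(a:ℤ)-1 = 2*(k:ℤ)+2*(a:ℤ)+1 by ring]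
  have pA4 : P4 (j+1) = P4 j * qint (2*(j:ℤ)+2) := P4_top _
  have pA5 : Pn (2*(k:ℤ)+2*(a:ℤ)-1) (j+1) = Pn (2*(k:ℤ)+2*(a:ℤ)-1) j * qint (2*(k:ℤ)+2*(a:ℤ)-2*(j:ℤ)-1) := by
    rw [Pn_top, show 2*(k:ℤ)+2*(a:ℤ)-1-2*(j:ℤ) = 2*(k:ℤ)+2*(a:ℤ)-2*(j:ℤ)-1 by ring]
  have pA6 : Pn (2*(k:ℤ)) (j+1) = Pn (2*(k:ℤ)) j * qint (2*(k:ℤ)-2*(j:ℤ)) := Pn_top _ _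
  have key := qint_star (2*(k:ℤ)) (2*(a:ℤ)) (2*(j:ℤ)+2)
  rw [show 2*(a:ℤ) - (2*(j:ℤ)+2) + 2 = 2*(a:ℤ)-2*(j:ℤ) by ring,
      show 2*(k:ℤ)+2*(a:ℤ)-(2*(j:ℤ)+2) = 2*(k:ℤ)+2*(a:ℤ)-2*(j:ℤ)-2 by ring,
      show 2*(k:ℤ)+2*(a:ℤ)-2*(j:ℤ)-2+2 = 2*(k:ℤ)+2*(a:ℤ)-2*(j:ℤ) by ring,
      show 2*(k:ℤ)-(2*(j:ℤ)+2)+2 = 2*(k:ℤ)-2*(j:ℤ) by ring] at key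
  have h1 : qint (2*(k:ℤ)+2*(a:ℤ)+2) ≠ 0 := qint_ne (by omega)
  have h2 : qint (2*(k:ℤ)+2*(a:ℤ)+1) ≠ 0 := qint_ne (by omega)
  have h3 : qint (2*(k:ℤ)+2*(a:ℤ)) ≠ 0 := qint_ne (by omega)
  have h4 : qint (2*(j:ℤ)+2) ≠ 0 := qint_ne (by omega)
  have h5 : qint (2*(k:ℤ)+2*(a:ℤ)-2*(j:ℤ)-1) ≠ 0 := qint_ne (by omega)
  have hB3 : Pn (2*(k:ℤ)+2*(a:ℤ)-1) j ≠ 0 := Pn_ne _ _ (fun i hi => by omega)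
  have hB4 : P4 j ≠ 0 := P4_ne j
  simp only [cc]
  rw [pFF1, pFF2, pA1, pA2, pA3, pA4, pA5, pA6]
  rw [show (((j+1 : ℕ)) : ℤ) = (j:ℤ)+1 by push_cast; ring]
  rw [show 2*((k:ℤ)+1)+2*(a:ℤ)-2*((j:ℤ)+1) = 2*(k:ℤ)+2*(a:ℤ)-2*(j:ℤ) by ring,
      show 2*((k:ℤ)+1)+2*(a:ℤ) = 2*(k:ℤ)+2*(a:ℤ)+2 by ring,
      show 2*(k:ℤ)+2*(a:ℤ)-2*((j:ℤ)+1) = 2*(k:ℤ)+2*(a:ℤ)-2*(j:ℤ)-2 by ring]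
  exact Wfactor _ _ _ _ _ _ _ _ _ _ _ _ _ _ _ _ h2 h1 h3 h5 h4 hB3 hB4 key

lemma lemA (ς : Kq) (a : ℕ) (ha : 1 ≤ a) (k : ℕ) :
    Gp ς 0 k = ∑ ℓ ∈ Finset.range (k+1),
      Polynomial.C (cc (k:ℤ) (a:ℤ) ℓ * (qq*ς)^ℓ) * Gp ς a (k-ℓ) := by
  induction k with
  | zero =>
    rw [Finset.sum_range_one, cc_zero _ _ (by omega) ha]
    simp [Gp]
  | succ k ih =>
    have gtop : Gp ς 0 (k+1) = Gp ς 0 k * ((Polynomial.X)^2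
        - Polynomial.C (qq*ς*qint (2*(k:ℤ))^2)) := by
      rw [Gp, Finset.prod_range_succ, ← Gp, show 2*(((0:ℕ):ℤ)+(k:ℤ)) = 2*(k:ℤ) by push_cast; ring]
    rw [gtop, ih, Finset.sum_mul]
    simp only [Nat.cast_add, Nat.cast_one]
    have split : ∀ ℓ ∈ Finset.range (k+1),
        Polynomial.C (cc (k:ℤ) (a:ℤ) ℓ * (qq*ς)^ℓ) * Gp ς a (k-ℓ) *
            ((Polynomial.X)^2 - Polynomial.C (qq*ς*qint (2*(k:ℤ))^2))
          = Polynomial.C (cc (k:ℤ) (a:ℤ) ℓ * (qq*ς)^ℓ) * Gp ς a (k-ℓ+1)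
            + Polynomial.C (cc (k:ℤ) (a:ℤ) ℓ * (qq*ς)^(ℓ+1) *
                (qint (2*(k:ℤ)+2*(a:ℤ)-2*(ℓ:ℤ))^2 - qint (2*(k:ℤ))^2)) * Gp ς a (k-ℓ) := by
      intro ℓ hℓ
      have hℓ' : ℓ ≤ k := by
        have := Finset.mem_range.mp hℓ
        omega
      have gstep : Gp ς a (k-ℓ+1) = Gp ς a (k-ℓ) * ((Polynomial.X)^2
          - Polynomial.C (qq*ς*qint (2*((a:ℤ)+((k-ℓ:ℕ):ℤ)))^2)) := by
        rw [Gp, Finset.prod_range_succ, ← Gp]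
      rw [gstep, show 2*((a:ℤ)+((k-ℓ:ℕ):ℤ)) = 2*(k:ℤ)+2*(a:ℤ)-2*(ℓ:ℤ) by
        push_cast [Nat.cast_sub hℓ']; ring]
      simp only [map_mul, map_sub, map_pow]
      ring
    rw [Finset.sum_congr rfl split, Finset.sum_add_distrib]
    conv_lhs => rw [Finset.sum_range_succ']
    conv_rhs => rw [Finset.sum_range_succ']
    have ext : (∑ i ∈ Finset.range k,
          Polynomial.C (cc (k:ℤ) (a:ℤ) (i+1) * (qq*ς)^(i+1)) * Gp ς a (k-(i+1)+1))
        = ∑ i ∈ Finset.range (k+1),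
          Polynomial.C (cc (k:ℤ) (a:ℤ) (i+1) * (qq*ς)^(i+1)) * Gp ς a (k-(i+1)+1) := by
      rw [Finset.sum_range_succ, cc_top_zero k a]
      simp
    rw [ext, add_right_comm, ← Finset.sum_add_distrib]
    congr 1
    · apply Finset.sum_congr rfl
      intro i hi
      have hi' : i ≤ k := by
        have := Finset.mem_range.mp hi
        omega
      have hrec := cc_rec k a i ha hi'
      by_cases hik : i < k
      · rw [show k-(i+1)+1 = k-i by omega, show k+1-(i+1) = k-i by omega, ← add_mul, ← map_add]
        congr 2
        linear_combination (-(qq*ς)^(i+1)) * hrec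
      · have hik' : i = k := by omega
        subst hik'
        rw [cc_top_zero i a] at hrec
        rw [cc_top_zero i a]
        rw [show i-(i+1)+1 = 1 by omega, show i+1-(i+1) = 0 by omega, show i-i = 0 by omega]
        simp only [zero_mul, map_zero, zero_add]
        congr 2
        linear_combination (-(qq*ς)^(i+1)) * hrec
    · rw [cc_zero _ _ (by omega) ha, cc_zero _ _ (by omega) ha]
      norm_num

lemma cc_eq_stmt (k a ℓ : ℕ) :
    cc (k:ℤ) (a:ℤ) ℓ
      = FFp (2*(k:ℤ)+2*(a:ℤ)) (2*ℓ) *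
        (qint (2*(k:ℤ)+2*(a:ℤ)-2*(ℓ:ℤ)) / qint (2*(k:ℤ)+2*(a:ℤ)) *
          ∏ m ∈ Finset.Icc 1 ℓ,
            qint (2*(a:ℤ)-2*(m:ℤ)+2) * qint (2*(k:ℤ)-2*(m:ℤ)+2) /
              (qint (2*(k:ℤ)+2*(a:ℤ)-2*(m:ℤ)+1) * qint (2*(m:ℤ)))) := by
  rw [prod_Icc_to_range (fun m => qint (2*(a:ℤ)-2*(m:ℤ)+2) * qint (2*(k:ℤ)-2*(m:ℤ)+2) /
      (qint (2*(k:ℤ)+2*(a:ℤ)-2*(m:ℤ)+1) * qint (2*(m:ℤ)))) ℓ]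
  have ep : ∏ i ∈ Finset.range ℓ,
      (qint (2*(a:ℤ)-2*((i+1:ℕ):ℤ)+2) * qint (2*(k:ℤ)-2*((i+1:ℕ):ℤ)+2) /
        (qint (2*(k:ℤ)+2*(a:ℤ)-2*((i+1:ℕ):ℤ)+1) * qint (2*((i+1:ℕ):ℤ))))
      = (Pn (2*(a:ℤ)) ℓ * Pn (2*(k:ℤ)) ℓ) / (Pn (2*(k:ℤ)+2*(a:ℤ)-1) ℓ * P4 ℓ) := by
    rw [Pn, Pn, Pn, P4, ← Finset.prod_mul_distrib, ← Finset.prod_mul_distrib,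
      ← Finset.prod_div_distrib]
    apply Finset.prod_congr rfl
    intro i _
    rw [show 2*(a:ℤ)-2*((i+1:ℕ):ℤ)+2 = 2*(a:ℤ)-2*(i:ℤ) by push_cast; ring,
        show 2*(k:ℤ)-2*((i+1:ℕ):ℤ)+2 = 2*(k:ℤ)-2*(i:ℤ) by push_cast; ring,
        show 2*(k:ℤ)+2*(a:ℤ)-2*((i+1:ℕ):ℤ)+1 = 2*(k:ℤ)+2*(a:ℤ)-1-2*(i:ℤ) by push_cast; ring,
        show 2*((i+1:ℕ):ℤ) = 2*(i:ℤ)+2 by push_cast; ring]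
  rw [ep, cc]
  ring

lemma coef_match (k a ℓ : ℕ) (hℓ : ℓ ≤ k) (ha : 1 ≤ a) :
    (qfact (2*k))⁻¹ * (qfact (2*a))⁻¹ * FFp (2*(k:ℤ)+2*(a:ℤ)) (2*ℓ)
      = qbinom (2*k+2*a) (2*k) * (qfact (2*(a+(k-ℓ))))⁻¹ := by
  have hFF := FF_mul_fact (2*k+2*a) ℓ (by omega)
  rw [show ((2*k+2*a : ℕ):ℤ) = 2*(k:ℤ)+2*(a:ℤ) by push_cast; ring,
      show 2*k+2*a-2*ℓ = 2*(a+(k-ℓ)) by omega] at hFF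
  rw [qbinom, show 2*k+2*a-2*k = 2*a by omega]
  have h1 := qfact_ne (2*k)
  have h2 := qfact_ne (2*a)
  have h3 := qfact_ne (2*(a+(k-ℓ)))
  have h4 := qfact_ne (2*k+2*a)
  rw [div_mul_eq_mul_div, eq_div_iff (mul_ne_zero h1 h2), mul_comm (qfact (2*k+2*a)),
    ← hFF]
  field_simp

/-- Multiplication formula `B_ev^{(2k)} B_ev^{(2a)}`. -/
theorem Bev_mul_even_even (ς : Kq) (hς : ς ≠ 0) (k a : ℕ) (hk : 1 ≤ k) (ha : 1 ≤ a) :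
    BevP ς (2 * k) * BevP ς (2 * a) =
    Polynomial.C (qbinom (2 * k + 2 * a) (2 * k)) *
      (BevP ς (2 * k + 2 * a) +
        ∑ ℓ ∈ Finset.Icc 1 k,
          Polynomial.C ((qint (2 * (k : ℤ) + 2 * (a : ℤ) - 2 * (ℓ : ℤ)) / qint (2 * (k : ℤ) + 2 * (a : ℤ))) *
            (∏ m ∈ Finset.Icc 1 ℓ,
              (qint (2 * (a : ℤ) - 2 * (m : ℤ) + 2) * qint (2 * (k : ℤ) - 2 * (m : ℤ) + 2)) /
                (qint (2 * (k : ℤ) + 2 * (a : ℤ) - 2 * (m : ℤ) + 1) * qint (2 * (m : ℤ)))) *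
            (qq * ς) ^ ℓ) *
          BevP ς (2 * k + 2 * a - 2 * ℓ)) := by
  rw [BevP_even ς k, BevP_even ς a, lemA ς a ha k]
  have hBtop : BevP ς (2*k+2*a) = Polynomial.C (qfact (2*(k+a)))⁻¹ * Gp ς 0 (k+a) := by
    rw [show 2*k+2*a = 2*(k+a) by ring, BevP_even]
  rw [hBtop, sum_Icc_to_range, mul_add, Finset.mul_sum]
  simp only [Finset.mul_sum, Finset.sum_mul]
  conv_lhs => rw [Finset.sum_range_succ']
  conv_rhs => rw [add_comm]
  congr 1
  · apply Finset.sum_congr rfl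
    intro i hi
    have hik : i + 1 ≤ k := by
      have := Finset.mem_range.mp hi
      omega
    have l : Polynomial.C (qfact (2*k))⁻¹ *
          (Polynomial.C (cc (k:ℤ) (a:ℤ) (i+1) * (qq*ς)^(i+1)) * Gp ς a (k-(i+1))) *
          (Polynomial.C (qfact (2*a))⁻¹ * Gp ς 0 a)
        = Polynomial.C ((qfact (2*k))⁻¹ * (qfact (2*a))⁻¹ * (cc (k:ℤ) (a:ℤ) (i+1) * (qq*ς)^(i+1))) *
            Gp ς 0 (a+(k-(i+1))) := by
      rw [← Gp_merge ς a (k-(i+1))]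
      simp only [map_mul]
      ring
    have r : Polynomial.C (qbinom (2*k+2*a) (2*k)) *
          (Polynomial.C ((qint (2*(k:ℤ)+2*(a:ℤ)-2*((i+1:ℕ):ℤ)) / qint (2*(k:ℤ)+2*(a:ℤ))) *
            (∏ m ∈ Finset.Icc 1 (i+1),
              (qint (2*(a:ℤ)-2*(m:ℤ)+2) * qint (2*(k:ℤ)-2*(m:ℤ)+2)) /
                (qint (2*(k:ℤ)+2*(a:ℤ)-2*(m:ℤ)+1) * qint (2*(m:ℤ)))) *
            (qq*ς)^(i+1)) * BevP ς (2*k+2*a-2*(i+1)))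
        = Polynomial.C (qbinom (2*k+2*a) (2*k) *
            ((qint (2*(k:ℤ)+2*(a:ℤ)-2*((i+1:ℕ):ℤ)) / qint (2*(k:ℤ)+2*(a:ℤ))) *
            (∏ m ∈ Finset.Icc 1 (i+1),
              (qint (2*(a:ℤ)-2*(m:ℤ)+2) * qint (2*(k:ℤ)-2*(m:ℤ)+2)) /
                (qint (2*(k:ℤ)+2*(a:ℤ)-2*(m:ℤ)+1) * qint (2*(m:ℤ)))) *
            (qq*ς)^(i+1)) * (qfact (2*(a+(k-(i+1)))))⁻¹) *
            Gp ς 0 (a+(k-(i+1))) := by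
      rw [show 2*k+2*a-2*(i+1) = 2*(a+(k-(i+1))) by omega, BevP_even]
      simp only [map_mul]
      ring
    rw [l, r]
    congr 2
    rw [cc_eq_stmt k a (i+1)]
    have hc := coef_match k a (i+1) hik ha
    linear_combination ((qint (2*(k:ℤ)+2*(a:ℤ)-2*((i+1:ℕ):ℤ)) / qint (2*(k:ℤ)+2*(a:ℤ)) *
      ∏ m ∈ Finset.Icc 1 (i+1),
        qint (2*(a:ℤ)-2*(m:ℤ)+2) * qint (2*(k:ℤ)-2*(m:ℤ)+2) /
          (qint (2*(k:ℤ)+2*(a:ℤ)-2*(m:ℤ)+1) * qint (2*(m:ℤ)))) * (qq*ς)^(i+1)) * hc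
  · have l0 : Polynomial.C (qfact (2*k))⁻¹ *
          (Polynomial.C (cc (k:ℤ) (a:ℤ) 0 * (qq*ς)^0) * Gp ς a (k-0)) *
          (Polynomial.C (qfact (2*a))⁻¹ * Gp ς 0 a)
        = Polynomial.C ((qfact (2*k))⁻¹ * (qfact (2*a))⁻¹ * (cc (k:ℤ) (a:ℤ) 0 * (qq*ς)^0)) *
            Gp ς 0 (a+(k-0)) := by
      rw [← Gp_merge ς a (k-0)]
      simp only [map_mul]
      ring
    have r0 : Polynomial.C (qbinom (2*k+2*a) (2*k)) * (Polynomial.C (qfact (2*(k+a)))⁻¹ * Gp ς 0 (k+a))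
        = Polynomial.C (qbinom (2*k+2*a) (2*k) * (qfact (2*(k+a)))⁻¹) * Gp ς 0 (k+a) := by
      simp only [map_mul]
      ring
    rw [l0, show a+(k-0) = k+a by omega, r0]
    congr 2
    rw [cc_zero _ _ (by omega) ha]
    have hc := coef_match k a 0 (by omega) ha
    rw [show (2*(a+(k-0))) = 2*(k+a) by omega] at hc
    simp only [FFp, mul_zero, Finset.range_zero, Finset.prod_empty, mul_one] at hc
    linear_combination hc
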